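/- arXiv:2202.03071 — 3 statements merged into one kernel-verified Lean document; each statement's English description precedes it below -/
import Mathlib

section
/- Let M ∈ R^{d×d} be positive definite. For all orthonormal matrices U, U' ∈ R^{d×(d-k)} with k < d, |√⟨UU^T, M⟩ - √⟨U'U'^T, M⟩| ≤ (σ_max(M)/√σ_min(M))·‖U - U'‖_F. -/
/-! Factor `M = Bᵀ B`. Then `√⟨X Xᵀ, M⟩ = ‖B X‖_F`, so by the reverse triangle inequality the left
side is at most `‖B (U - U')‖_F = √tr((U - U')ᵀ M (U - U'))`. Since `M ≤ σ_max • 1` in the Loewner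
order, this trace is at most `σ_max ‖U - U'‖_F²`, and `√σ_max ≤ σ_max / √σ_min`. -/

open Matrix

namespace Matrix

variable {m n : Type*} [Fintype m] [Fintype n]

open scoped Norms.Frobenius

theorem frobenius_norm_eq_sqrt_trace_transpose_mul_self (A : Matrix m n ℝ) :
    ‖A‖ = √(trace (Aᵀ * A)) := by
  rw [frobenius_norm_def, ← Real.sqrt_eq_rpow, trace, Finset.sum_comm]
  simp [Matrix.mul_apply, sq]

open scoped MatrixOrder in
theorem PosSemidef.abs_sqrt_trace_sub_sqrt_trace_le {M : Matrix n n ℝ} (hM : M.PosSemidef)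
    (X Y : Matrix n m ℝ) :
    |√(trace (Xᵀ * M * X)) - √(trace (Yᵀ * M * Y))| ≤ √(trace ((X - Y)ᵀ * M * (X - Y))) := by
  classical
  obtain ⟨B, rfl⟩ := CStarAlgebra.nonneg_iff_eq_star_mul_self.mp hM.nonneg
  have hnorm (Z : Matrix n m ℝ) : √(trace (Zᵀ * (star B * B) * Z)) = ‖B * Z‖ := by
    rw [frobenius_norm_eq_sqrt_trace_transpose_mul_self, transpose_mul, star_eq_conjTranspose,
      conjTranspose_eq_transpose_of_trivial]
    simp only [Matrix.mul_assoc]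
  rw [hnorm, hnorm, hnorm, Matrix.mul_sub]
  exact abs_norm_sub_norm_le _ _

open scoped MatrixOrder in
theorem IsHermitian.trace_transpose_mul_mul_le [DecidableEq n] {A : Matrix n n ℝ}
    (hA : A.IsHermitian) (X : Matrix n m ℝ) :
    trace (Xᵀ * A * X) ≤ (⨆ i, hA.eigenvalues i) * trace (Xᵀ * X) := by
  have hle : A ≤ algebraMap ℝ _ (⨆ i, hA.eigenvalues i) := by
    refine le_algebraMap_of_spectrum_le (fun x hx => ?_) hA.isSelfAdjoint
    obtain ⟨i, rfl⟩ := hA.spectrum_real_eq_range_eigenvalues ▸ hx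
    exact le_ciSup (Set.finite_range _).bddAbove i
  have := ((Matrix.le_iff.mp hle).conjTranspose_mul_mul_same X).trace_nonneg
  rw [conjTranspose_eq_transpose_of_trivial, Algebra.algebraMap_eq_smul_one, Matrix.mul_sub,
    Matrix.sub_mul, trace_sub, Matrix.mul_smul, Matrix.mul_one, Matrix.smul_mul, trace_smul,
    smul_eq_mul] at this
  linarith

theorem PosDef.sqrt_iSup_eigenvalues_le [DecidableEq n] [Nonempty n] {A : Matrix n n ℝ}
    (hA : A.PosDef) :
    √(⨆ i, hA.isHermitian.eigenvalues i) ≤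
      (⨆ i, hA.isHermitian.eigenvalues i) / √(⨅ i, hA.isHermitian.eigenvalues i) := by
  obtain ⟨i, hi⟩ := exists_eq_ciInf_of_finite (f := hA.isHermitian.eigenvalues)
  set σ := ⨆ i, hA.isHermitian.eigenvalues i
  set μ := ⨅ i, hA.isHermitian.eigenvalues i
  have hμ : 0 < μ := hi ▸ hA.eigenvalues_pos i
  have hμσ : μ ≤ σ := ciInf_le_ciSup (Set.finite_range _).bddBelow (Set.finite_range _).bddAbove
  rw [le_div_iff₀ (Real.sqrt_pos.mpr hμ)]
  calc √σ * √μ ≤ √σ * √σ := by gcongr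
    _ = σ := Real.mul_self_sqrt (hμ.le.trans hμσ)

end Matrix

theorem stmt_5_general {d k : ℕ} (hkd : k < d) (M : Matrix (Fin d) (Fin d) ℝ)
    (hM : M.PosDef) (U U' : Matrix (Fin d) (Fin (d - k)) ℝ) :
    |Real.sqrt (Matrix.trace ((U * Uᵀ)ᵀ * M)) - Real.sqrt (Matrix.trace ((U' * U'ᵀ)ᵀ * M))|
      ≤ ((⨆ i, hM.isHermitian.eigenvalues i) /
            Real.sqrt (⨅ i, hM.isHermitian.eigenvalues i)) *
          Real.sqrt (Matrix.trace ((U - U')ᵀ * (U - U'))) := by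
  have : Nonempty (Fin d) := ⟨⟨0, by omega⟩⟩
  have htrace (X : Matrix (Fin d) (Fin (d - k)) ℝ) :
      trace ((X * Xᵀ)ᵀ * M) = trace (Xᵀ * M * X) := by
    rw [transpose_mul, transpose_transpose, Matrix.mul_assoc, trace_mul_comm, Matrix.mul_assoc]
  rw [htrace, htrace]
  have hfrob : 0 ≤ trace ((U - U')ᵀ * (U - U')) := by
    simpa using (posSemidef_conjTranspose_mul_self (U - U')).trace_nonneg
  calc _ ≤ √(trace ((U - U')ᵀ * M * (U - U'))) :=
        hM.posSemidef.abs_sqrt_trace_sub_sqrt_trace_le U U'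
    _ ≤ √(⨆ i, hM.isHermitian.eigenvalues i) * √(trace ((U - U')ᵀ * (U - U'))) := by
      rw [← Real.sqrt_mul' _ hfrob]
      exact Real.sqrt_le_sqrt (hM.isHermitian.trace_transpose_mul_mul_le _)
    _ ≤ _ := by gcongr; exact hM.sqrt_iSup_eigenvalues_le

/-- For positive definite `M` and orthonormal `U, U' ∈ ℝ^{d × (d-k)}` with `k < d`,
`|√⟨U Uᵀ, M⟩ - √⟨U' U'ᵀ, M⟩| ≤ (σ_max(M)/√σ_min(M)) ‖U - U'‖_F`. -/
theorem stmt_5 {d k : ℕ} (hkd : k < d) (M : Matrix (Fin d) (Fin d) ℝ)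
    (hM : M.PosDef) (U U' : Matrix (Fin d) (Fin (d - k)) ℝ)
    (hU : Uᵀ * U = 1) (hU' : U'ᵀ * U' = 1) :
    |Real.sqrt (Matrix.trace ((U * Uᵀ)ᵀ * M)) - Real.sqrt (Matrix.trace ((U' * U'ᵀ)ᵀ * M))|
      ≤ ((⨆ i, hM.isHermitian.eigenvalues i) /
            Real.sqrt (⨅ i, hM.isHermitian.eigenvalues i)) *
          Real.sqrt (Matrix.trace ((U - U')ᵀ * (U - U'))) :=
  stmt_5_general hkd M hM U U'
end

section
/- For the Wasserstein-type divergence W(Q1 ∥ Q2) = ‖μ1 - μ2‖² + trace(Σ1 + Σ2 - 2(Σ2^{1/2} Σ1 Σ2^{1/2})^{1/2}) between pairs (μ1,Σ1) and (μ2,Σ2) with Σ1, Σ2 positive semidefinite, one has W(Q1 ∥ Q2) ≥ 0, and W(Q1 ∥ Q2) = 0 if and only if μ1 = μ2 and Σ1 = Σ2. -/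
open Matrix

section

open scoped ComplexOrder

/-- The positive semidefinite square root of a positive semidefinite matrix
(the definition `Matrix.PosSemidef.sqrt` of the older Mathlib, removed since). -/
noncomputable def Matrix.PosSemidef.sqrt {n : Type*} [Fintype n] [DecidableEq n] {𝕜 : Type*}
    [RCLike 𝕜] {A : Matrix n n 𝕜} (hA : A.PosSemidef) : Matrix n n 𝕜 :=
  hA.1.eigenvectorUnitary.1 * diagonal ((↑) ∘ (fun x : ℝ => √x) ∘ hA.1.eigenvalues) *
    (star hA.1.eigenvectorUnitary : Matrix n n 𝕜)

end

/-!
Write `A = S₁^{1/2}`, `B = S₂^{1/2}` and `T = (B S₁ B)^{1/2}`, so that `T² = (AB)ᴴ(AB)`.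
With `T⁺` the Moore–Penrose inverse of `T`, the matrix `W = A B T⁺` is a partial isometry
(`W Wᴴ W = W`) with `Wᴴ (A B) = T`; this is the polar decomposition of `AB`. Expanding squares,
`tr S₁ + tr S₂ - 2 tr T = ‖A W - B‖² + ‖A - A W Wᴴ‖²` in the Frobenius norm. Hence the trace
term is nonnegative, and if it vanishes then `A W = B` and `A = A W Wᴴ`, so
`S₁ = A Aᴴ = (A W)(A W)ᴴ = B Bᴴ = S₂`.
-/

open scoped MatrixOrder

namespace Matrix

variable {n : Type*} [Fintype n] [DecidableEq n]

lemma PosSemidef.sqrt_eq_cfcSqrt {A : Matrix n n ℝ} (hA : A.PosSemidef) :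
    hA.sqrt = CFC.sqrt A := by
  rw [CFC.sqrt_eq_real_sqrt A hA.nonneg, cfcₙ_eq_cfc (hf0 := Real.sqrt_zero),
    hA.1.cfc_eq, IsHermitian.cfc, Unitary.conjStarAlgAut_apply]
  rfl

lemma PosSemidef.isHermitian_sqrt {A : Matrix n n ℝ} (hA : A.PosSemidef) :
    hA.sqrt.IsHermitian := by
  rw [hA.sqrt_eq_cfcSqrt]
  exact (CFC.sqrt_nonneg A).posSemidef.1

lemma PosSemidef.sqrt_mul_sqrt {A : Matrix n n ℝ} (hA : A.PosSemidef) :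
    hA.sqrt * hA.sqrt = A := by
  rw [hA.sqrt_eq_cfcSqrt]
  exact CFC.sqrt_mul_sqrt_self A hA.nonneg

lemma IsHermitian.exists_isHermitian_generalizedInverse {T : Matrix n n ℝ} (hT : T.IsHermitian) :
    ∃ R : Matrix n n ℝ, R.IsHermitian ∧ Commute R T ∧ T * R * T = T ∧ R * T * R = R := by
  have hcont (f : ℝ → ℝ) : ContinuousOn f (spectrum ℝ T) := T.finite_real_spectrum.continuousOn f
  -- Since `0⁻¹ = 0` in `ℝ`, `cfc (·⁻¹) T` is the Moore–Penrose inverse of `T`.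
  refine ⟨cfc (·⁻¹ : ℝ → ℝ) T, IsSelfAdjoint.cfc, ?_, ?_, ?_⟩
  · simpa only [cfc_id ℝ T] using cfc_commute_cfc (·⁻¹ : ℝ → ℝ) id T
  · conv_rhs => rw [← cfc_id ℝ T, show (id : ℝ → ℝ) = fun x => x * x⁻¹ * x by
      funext x; by_cases hx : x = 0 <;> simp [hx]]
    rw [cfc_mul _ _ T (hcont _) (hcont _), cfc_mul _ _ T (hcont _) (hcont _), cfc_id' ℝ T]
  · conv_rhs => rw [show (fun x : ℝ => x⁻¹) = fun x => x⁻¹ * x * x⁻¹ by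
      funext x; by_cases hx : x = 0 <;> simp [hx]]
    rw [cfc_mul _ _ T (hcont _) (hcont _), cfc_mul _ _ T (hcont _) (hcont _), cfc_id' ℝ T]

lemma exists_partialIsometry_conjTranspose_mul_eq {M T : Matrix n n ℝ} (hT : T.IsHermitian)
    (hTM : T * T = Mᴴ * M) : ∃ W : Matrix n n ℝ, W * Wᴴ * W = W ∧ Wᴴ * M = T := by
  obtain ⟨R, hR, hRT, hTRT, hRTR⟩ := hT.exists_isHermitian_generalizedInverse
  have hWM : (M * R)ᴴ * M = T := by
    rw [conjTranspose_mul, hR.eq, mul_assoc, ← hTM, ← mul_assoc, hRT.eq, hTRT]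
  refine ⟨M * R, ?_, hWM⟩
  rw [mul_assoc, ← mul_assoc _ M, hWM, mul_assoc, ← mul_assoc R, hRTR]

omit [DecidableEq n] in
lemma trace_add_sub_two_mul_eq_of_partialIsometry (X Y : Matrix n n ℝ) {W : Matrix n n ℝ}
    (hW : W * Wᴴ * W = W) :
    (Xᴴ * X).trace + (Yᴴ * Y).trace - 2 * (Wᴴ * (Xᴴ * Y)).trace =
      ((X * W - Y)ᴴ * (X * W - Y)).trace +
        ((X - X * (W * Wᴴ))ᴴ * (X - X * (W * Wᴴ))).trace := by
  have h1 : ((X * W - Y)ᴴ * (X * W - Y)).trace =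
      (Xᴴ * X * (W * Wᴴ)).trace - 2 * (Wᴴ * (Xᴴ * Y)).trace + (Yᴴ * Y).trace := by
    have hc : (Yᴴ * (X * W)).trace = (Wᴴ * (Xᴴ * Y)).trace := by
      rw [← star_trivial (trace _), ← trace_conjTranspose]
      simp only [conjTranspose_mul, conjTranspose_conjTranspose, mul_assoc]
    rw [conjTranspose_sub, sub_mul, mul_sub, mul_sub, trace_sub, trace_sub, trace_sub, hc,
      conjTranspose_mul, mul_assoc, trace_mul_comm Wᴴ]
    simp only [mul_assoc]
    ring
  set P := W * Wᴴ
  have hP : P * P = P := by rw [← mul_assoc, hW]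
  have hPH : Pᴴ = P := by rw [conjTranspose_mul, conjTranspose_conjTranspose]
  clear_value P
  have h2 : ((X - X * P)ᴴ * (X - X * P)).trace = (Xᴴ * X).trace - (Xᴴ * X * P).trace := by
    have e1 : (P * Xᴴ * X).trace = (Xᴴ * X * P).trace := by
      rw [mul_assoc, trace_mul_comm]
    have e2 : (P * Xᴴ * (X * P)).trace = (Xᴴ * X * P).trace := by
      rw [mul_assoc, ← mul_assoc Xᴴ, trace_mul_comm, mul_assoc, hP]
    rw [conjTranspose_sub, conjTranspose_mul, hPH, sub_mul, mul_sub, mul_sub, trace_sub,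
      trace_sub, trace_sub, e1, e2, ← mul_assoc]
    ring
  rw [h1, h2]
  ring

lemma exists_trace_add_sub_two_mul_trace_eq {X Y T : Matrix n n ℝ} (hT : T.IsHermitian)
    (hTXY : T * T = (Xᴴ * Y)ᴴ * (Xᴴ * Y)) :
    ∃ W : Matrix n n ℝ, (Xᴴ * X).trace + (Yᴴ * Y).trace - 2 * T.trace =
      ((X * W - Y)ᴴ * (X * W - Y)).trace +
        ((X - X * (W * Wᴴ))ᴴ * (X - X * (W * Wᴴ))).trace := by
  obtain ⟨W, hW, hWT⟩ := exists_partialIsometry_conjTranspose_mul_eq hT hTXY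
  exact ⟨W, hWT ▸ trace_add_sub_two_mul_eq_of_partialIsometry X Y hW⟩

lemma two_mul_trace_le_of_mul_self_eq {X Y T : Matrix n n ℝ} (hT : T.IsHermitian)
    (hTXY : T * T = (Xᴴ * Y)ᴴ * (Xᴴ * Y)) :
    2 * T.trace ≤ (Xᴴ * X).trace + (Yᴴ * Y).trace := by
  obtain ⟨W, hW⟩ := exists_trace_add_sub_two_mul_trace_eq hT hTXY
  have h₁ := (posSemidef_conjTranspose_mul_self (X * W - Y)).trace_nonneg
  have h₂ := (posSemidef_conjTranspose_mul_self (X - X * (W * Wᴴ))).trace_nonneg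
  linarith

lemma mul_conjTranspose_eq_of_two_mul_trace_eq {X Y T : Matrix n n ℝ} (hT : T.IsHermitian)
    (hTXY : T * T = (Xᴴ * Y)ᴴ * (Xᴴ * Y))
    (h : 2 * T.trace = (Xᴴ * X).trace + (Yᴴ * Y).trace) :
    X * Xᴴ = Y * Yᴴ := by
  obtain ⟨W, hW⟩ := exists_trace_add_sub_two_mul_trace_eq hT hTXY
  have h₁ := (posSemidef_conjTranspose_mul_self (X * W - Y)).trace_nonneg
  have h₂ := (posSemidef_conjTranspose_mul_self (X - X * (W * Wᴴ))).trace_nonneg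
  have hXW : X * W = Y :=
    sub_eq_zero.mp (trace_conjTranspose_mul_self_eq_zero_iff.mp (by linarith))
  have hX : X = X * (W * Wᴴ) :=
    sub_eq_zero.mp (trace_conjTranspose_mul_self_eq_zero_iff.mp (by linarith))
  calc X * Xᴴ = X * (W * Wᴴ) * Xᴴ := congrArg (· * Xᴴ) hX
    _ = (X * W) * (X * W)ᴴ := by simp only [conjTranspose_mul, mul_assoc]
    _ = Y * Yᴴ := by rw [hXW]

lemma PosSemidef.sqrt_sqrt_mul_mul_sqrt_eq_self {A : Matrix n n ℝ} (hA : A.PosSemidef)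
    (hC : (hA.sqrt * A * hA.sqrt).PosSemidef) : hC.sqrt = A := by
  have h : hA.sqrt * A * hA.sqrt = A * A := by
    have hB := hA.sqrt_mul_sqrt
    generalize hA.sqrt = B at hB ⊢
    rw [← hB, mul_assoc, mul_assoc, mul_assoc]
  rw [hC.sqrt_eq_cfcSqrt, h, CFC.sqrt_mul_self A hA.nonneg]

end Matrix

/-- The Wasserstein-type divergence
`W(Q₁ ∥ Q₂) = ‖μ₁ - μ₂‖² + tr(S₁ + S₂ - 2 (S₂^{1/2} S₁ S₂^{1/2})^{1/2})` is nonnegative,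
and it vanishes iff `μ₁ = μ₂` and `S₁ = S₂`. -/
theorem stmt_8 {d : ℕ} (μ₁ μ₂ : EuclideanSpace ℝ (Fin d))
    (S₁ S₂ : Matrix (Fin d) (Fin d) ℝ) (hS₁ : S₁.PosSemidef) (hS₂ : S₂.PosSemidef)
    (hC : (hS₂.sqrt * S₁ * hS₂.sqrt).PosSemidef) :
    0 ≤ ‖μ₁ - μ₂‖ ^ 2 + Matrix.trace (S₁ + S₂ - (2 : ℝ) • hC.sqrt) ∧
      (‖μ₁ - μ₂‖ ^ 2 + Matrix.trace (S₁ + S₂ - (2 : ℝ) • hC.sqrt) = 0 ↔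
        μ₁ = μ₂ ∧ S₁ = S₂) := by
  have hA := hS₁.isHermitian_sqrt
  have hB := hS₂.isHermitian_sqrt
  have hT := hC.isHermitian_sqrt
  have hTAB : hC.sqrt * hC.sqrt = (hS₁.sqrtᴴ * hS₂.sqrt)ᴴ * (hS₁.sqrtᴴ * hS₂.sqrt) := by
    rw [hC.sqrt_mul_sqrt, conjTranspose_mul, conjTranspose_conjTranspose, hA.eq, hB.eq]
    simp only [mul_assoc]
    rw [← mul_assoc hS₁.sqrt, hS₁.sqrt_mul_sqrt]
  have htr : trace (S₁ + S₂ - (2 : ℝ) • hC.sqrt) = (hS₁.sqrtᴴ * hS₁.sqrt).trace +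
      (hS₂.sqrtᴴ * hS₂.sqrt).trace - 2 * hC.sqrt.trace := by
    rw [hA.eq, hB.eq, hS₁.sqrt_mul_sqrt, hS₂.sqrt_mul_sqrt, trace_sub, trace_add, trace_smul,
      smul_eq_mul]
  have hle := two_mul_trace_le_of_mul_self_eq hT hTAB
  have hμ := sq_nonneg ‖μ₁ - μ₂‖
  refine ⟨by linarith, fun h => ⟨?_, ?_⟩, ?_⟩
  · rw [← sub_eq_zero, ← norm_eq_zero, ← pow_eq_zero_iff two_ne_zero]
    linarith
  · have hS := mul_conjTranspose_eq_of_two_mul_trace_eq hT hTAB (by linarith)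
    rwa [hA.eq, hB.eq, hS₁.sqrt_mul_sqrt, hS₂.sqrt_mul_sqrt] at hS
  · rintro ⟨rfl, rfl⟩
    simp [hS₁.sqrt_sqrt_mul_mul_sqrt_eq_self hC, two_smul]
end

section
/- Let υ < 0, ε > 0, and t ≥ ε. Then inf_{γ > 0} { γε + (γυ/(γ-υ))·t } = υ(√t - √ε)², attained at γ* = υ(1 - √(t/ε)) > 0. -/
/-- For `υ < 0`, `ε > 0` and `t ≥ ε`, the infimum over `γ > 0` of
`γ ε + (γ υ / (γ - υ)) t` equals `υ (√t - √ε)²`, attained at `γ* = υ (1 - √(t/ε))`,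
which is positive when `t > ε`. -/
theorem stmt_11 (υ ε t : ℝ) (hυ : υ < 0) (hε : 0 < ε) (ht : ε ≤ t) :
    IsGLB {x : ℝ | ∃ γ : ℝ, 0 < γ ∧ x = γ * ε + (γ * υ / (γ - υ)) * t}
        (υ * (Real.sqrt t - Real.sqrt ε) ^ 2) ∧
      ((υ * (1 - Real.sqrt (t / ε))) * ε +
          ((υ * (1 - Real.sqrt (t / ε))) * υ / ((υ * (1 - Real.sqrt (t / ε))) - υ)) * t
        = υ * (Real.sqrt t - Real.sqrt ε) ^ 2) ∧
      (ε < t → 0 < υ * (1 - Real.sqrt (t / ε))) := by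
  have hse : 0 < Real.sqrt ε := Real.sqrt_pos.2 hε
  have hst : Real.sqrt ε ≤ Real.sqrt t := Real.sqrt_le_sqrt ht
  have hse2 : Real.sqrt ε ^ 2 = ε := Real.sq_sqrt hε.le
  have hst2 : Real.sqrt t ^ 2 = t := Real.sq_sqrt (hε.le.trans ht)
  have hq : Real.sqrt (t / ε) = Real.sqrt t / Real.sqrt ε := Real.sqrt_div (hε.le.trans ht) ε
  set se := Real.sqrt ε with hsedef
  set st := Real.sqrt t with hstdef
  -- denominator at γ*
  have hden : (υ * (1 - Real.sqrt (t / ε))) - υ = -υ * st / se := by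
    rw [hq]; field_simp; ring
  have hdenne : (υ * (1 - Real.sqrt (t / ε))) - υ ≠ 0 := by
    rw [hden]
    have : 0 < -υ * st / se := by
      apply div_pos (mul_pos (by linarith) (lt_of_lt_of_le hse hst)) hse
    linarith
  -- equality at γ*
  have heq : (υ * (1 - Real.sqrt (t / ε))) * ε +
      ((υ * (1 - Real.sqrt (t / ε))) * υ / ((υ * (1 - Real.sqrt (t / ε))) - υ)) * t
      = υ * (st - se) ^ 2 := by
    have hne : se ≠ 0 := ne_of_gt hse
    have hstne : st ≠ 0 := ne_of_gt (lt_of_lt_of_le hse hst)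
    rw [hden, hq]
    have key : υ * (1 - st / se) * υ / (-υ * st / se) = υ * (1 - se / st) := by
      field_simp
      field_simp [hυ.ne, hstne]
      ring
    rw [key, ← hse2, ← hst2]
    field_simp
    ring
  -- lower bound
  have hlb : ∀ x ∈ {x : ℝ | ∃ γ : ℝ, 0 < γ ∧ x = γ * ε + (γ * υ / (γ - υ)) * t},
      υ * (st - se) ^ 2 ≤ x := by
    rintro x ⟨γ, hγ, rfl⟩
    have hd : 0 < γ - υ := by linarith
    rw [div_mul_eq_mul_div, ← sub_le_iff_le_add', le_div_iff₀ hd, ← hse2, ← hst2]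
    nlinarith [sq_nonneg (se * γ - υ * (se - st))]
  refine ⟨⟨hlb, ?_⟩, heq, ?_⟩
  · -- greatest lower bound
    intro b hb
    rcases eq_or_lt_of_le ht with h | h
    · -- t = ε : infimum is 0, not attained
      have hts : st = se := by rw [hstdef, hsedef, h]
      rw [hts]
      simp only [sub_self, ne_eq, OfNat.ofNat_ne_zero, not_false_eq_true, zero_pow, mul_zero]
      by_contra hb0
      push_neg at hb0
      have hγ : 0 < b / (2 * ε) := div_pos hb0 (by linarith)
      have hx := hb ⟨b / (2 * ε), hγ, rfl⟩
      have hd : 0 < b / (2 * ε) - υ := by linarith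
      have h2 : (b / (2 * ε) * υ / (b / (2 * ε) - υ)) * t ≤ 0 := by
        apply mul_nonpos_of_nonpos_of_nonneg
        · exact div_nonpos_of_nonpos_of_nonneg (by nlinarith) hd.le
        · linarith
      have h3 : b / (2 * ε) * ε = b / 2 := by field_simp
      nlinarith
    · -- t > ε : attained at γ*
      have hγpos : 0 < υ * (1 - Real.sqrt (t / ε)) := by
        have h1 : 1 < Real.sqrt (t / ε) := by
          rw [hq, lt_div_iff₀ hse, one_mul]
          exact Real.sqrt_lt_sqrt hε.le h
        nlinarith
      have := hb ⟨υ * (1 - Real.sqrt (t / ε)), hγpos, rfl⟩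
      linarith [heq ▸ this]
  · intro h
    have h1 : 1 < Real.sqrt (t / ε) := by
      rw [hq, lt_div_iff₀ hse, one_mul]
      exact Real.sqrt_lt_sqrt hε.le h
    nlinarith
end
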